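/- arXiv:1304.3522 — 2 statements merged into one kernel-verified Lean document; each statement's English description precedes it below -/
import Mathlib

section
/- Let (η_m) be a real sequence. Then Σ_m 3^m (3 η_{m+2} - 16 η_{m+1} + 5 η_m)^2 < ∞ if and only if there exist a constant A and a sequence (η'_m) with η_m = 5^m A + η'_m and Σ_m 3^m (η'_m)^2 < ∞. Moreover there are constants C_1, C_2 with Σ_m 3^m (η'_m)^2 ≤ C_1 (η_2 - 5 η_1)^2 + C_2 Σ_m 3^m (3 η_{m+2} - 16 η_{m+1} + 5 η_m)^2. -/
/-!
With `u k = η (k + 1) - 5 η k` the operator becomes `3 u (m + 1) - u m`. The recursion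
`u (m + 1) = (u m + ε m) / 3` together with `(a + b)² ≤ 2a² + 2b²` bounds `∑ 3ᵐ u m²` by `u 0²`
and `∑ 3ᵐ ε m²`. The equation `x (k + 1) = 5 x k + u k` then has the solution
`η' k = -∑ⱼ u (k + j) / 5ʲ⁺¹`, and Cauchy–Schwarz against the weights `15⁻ʲ` gives
`3ᵏ η' k² ≤ C ∑ⱼ 3ᵏ⁺ʲ u (k + j)² / 5ʲ`, which sums over `k` to a multiple of `∑ 3ᵐ u m²`.
The difference `η - η'` solves the homogeneous equation, so it is `5ᵏ A`. Conversely `5ᵏ` is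
annihilated by the operator, which is bounded on the space weighted by `3ᵐ`.
-/

open Finset

theorem summable_and_sq_tsum_le {ι : Type*} {f a : ι → ℝ} (ha : ∀ i, 0 < a i)
    (ha_sum : Summable a) (hfa : Summable fun i => f i ^ 2 / a i) :
    Summable f ∧ (∑' i, f i) ^ 2 ≤ (∑' i, a i) * ∑' i, f i ^ 2 / a i := by
  have hf : Summable f := by
    refine .of_norm_bounded ((ha_sum.add hfa).div_const 2) fun i => ?_
    have h := ha i
    have : 2 * |f i| - a i ≤ f i ^ 2 / a i := by
      rw [le_div_iff₀ h]; nlinarith [sq_nonneg (|f i| - a i), sq_abs (f i)]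
    rw [Real.norm_eq_abs, le_div_iff₀ two_pos]
    linarith
  refine ⟨hf, ?_⟩
  -- `t ↦ ∑' (f - t a)² / a` is a nonnegative quadratic polynomial.
  have hquad : ∀ t, 0 ≤ (∑' i, a i) * (t * t) + (-2 * ∑' i, f i) * t + ∑' i, f i ^ 2 / a i := by
    intro t
    have hsum := ((ha_sum.hasSum.mul_left (t * t)).add (hf.hasSum.mul_left (-2 * t))).add
      hfa.hasSum
    refine le_of_le_of_eq (hsum.nonneg fun i => ?_) (by ring)
    have h := ha i
    have : t * t * a i + -2 * t * f i + f i ^ 2 / a i = (f i - t * a i) ^ 2 / a i := by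
      field_simp; ring
    rw [this]; positivity
  have := discrim_le_zero hquad
  rw [discrim] at this
  linarith

theorem summable_and_tsum_le_of_succ_le {v e : ℕ → ℝ} {c : ℝ} (hv : ∀ m, 0 ≤ v m)
    (he : ∀ m, 0 ≤ e m) (hc₀ : 0 ≤ c) (hc₁ : c < 1) (he_sum : Summable e)
    (hstep : ∀ m, v (m + 1) ≤ c * v m + e m) :
    Summable v ∧ ∑' m, v m ≤ (v 0 + ∑' m, e m) / (1 - c) := by
  suffices h : ∀ n, ∑ m ∈ range n, v m ≤ (v 0 + ∑' m, e m) / (1 - c) from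
    ⟨summable_of_sum_range_le hv h, Real.tsum_le_of_sum_range_le hv h⟩
  intro n
  have hshift : ∑ m ∈ range n, v (m + 1) ≤ c * ∑ m ∈ range n, v m + ∑' m, e m := by
    calc ∑ m ∈ range n, v (m + 1) ≤ ∑ m ∈ range n, (c * v m + e m) :=
          sum_le_sum fun m _ => hstep m
      _ ≤ c * ∑ m ∈ range n, v m + ∑' m, e m := by
        rw [sum_add_distrib, ← mul_sum]
        gcongr
        exact he_sum.sum_le_tsum _ fun m _ => he m
  have hmono : ∑ m ∈ range n, v m ≤ ∑ m ∈ range (n + 1), v m := by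
    rw [sum_range_succ]; linarith [hv n]
  have hc := mul_le_mul_of_nonneg_left hmono hc₀
  rw [le_div_iff₀ (by linarith)]
  nlinarith [sum_range_succ' v n]

theorem summable_and_tsum_le_of_mul_succ_sub {q : ℝ} (hq : 2 < q) {u e : ℕ → ℝ}
    (hu : ∀ m, q * u (m + 1) - u m = e m) (he : Summable fun m => q ^ m * e m ^ 2) :
    Summable (fun m => q ^ m * u m ^ 2) ∧
      ∑' m, q ^ m * u m ^ 2 ≤ (q * u 0 ^ 2 + 2 * ∑' m, q ^ m * e m ^ 2) / (q - 2) := by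
  have hq₀ : 0 < q := by linarith
  have hstep : ∀ m, q ^ (m + 1) * u (m + 1) ^ 2 ≤
      2 / q * (q ^ m * u m ^ 2) + 2 / q * (q ^ m * e m ^ 2) := by
    intro m
    have hsucc : u (m + 1) = (u m + e m) / q := by
      rw [eq_div_iff hq₀.ne']; linarith [hu m]
    have hpow : 0 < q ^ m := by positivity
    rw [hsucc, pow_succ, div_pow]
    field_simp
    nlinarith [mul_nonneg hpow.le (sq_nonneg (u m - e m))]
  obtain ⟨hsum, hle⟩ := summable_and_tsum_le_of_succ_le
    (v := fun m => q ^ m * u m ^ 2) (e := fun m => 2 / q * (q ^ m * e m ^ 2))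
    (fun m => by positivity) (fun m => by positivity) (by positivity)
    (by rw [div_lt_one hq₀]; linarith)
    (he.mul_left (2 / q)) hstep
  refine ⟨hsum, hle.trans_eq ?_⟩
  rw [tsum_mul_left]
  field_simp

theorem eq_pow_mul_add_of_succ_eq {l : ℝ} {u x y : ℕ → ℝ} (hx : ∀ k, x (k + 1) = l * x k + u k)
    (hy : ∀ k, y (k + 1) = l * y k + u k) (k : ℕ) : x k = l ^ k * (x 0 - y 0) + y k := by
  induction k with
  | zero => ring
  | succ k ih => rw [hx, hy, ih]; ring

theorem summable_nat_add_div_pow {v : ℕ → ℝ} (hv : ∀ k, 0 ≤ v k) (hsum : Summable v) {l : ℝ}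
    (hl : 1 ≤ l) (m : ℕ) : Summable fun j => v (m + j) / l ^ j :=
  (((summable_nat_add_iff m).2 hsum).congr fun j => by rw [add_comm]).of_nonneg_of_le
    (fun j => div_nonneg (hv _) (by positivity)) fun j => div_le_self (hv _) (one_le_pow₀ hl)

noncomputable def tailSolution (l : ℝ) (u : ℕ → ℝ) (m : ℕ) : ℝ :=
  -∑' j, u (m + j) / l ^ (j + 1)

section
variable {l q : ℝ} {u : ℕ → ℝ}

theorem tailSolution_succ (hl : l ≠ 0)
    (hu : ∀ m, Summable fun j => u (m + j) / l ^ (j + 1)) (m : ℕ) :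
    tailSolution l u (m + 1) = l * tailSolution l u m + u m := by
  have hshift : ∀ j, u (m + (j + 1)) / l ^ (j + 1 + 1) = u (m + 1 + j) / l ^ (j + 1) / l := by
    intro j; rw [add_comm j 1, ← add_assoc, pow_succ, div_div]
  simp only [tailSolution, (hu m).tsum_eq_zero_add, hshift, tsum_div_const, add_zero, zero_add,
    pow_one]
  generalize ∑' j, u (m + 1 + j) / l ^ (j + 1) = T
  field_simp
  ring

theorem summable_and_weighted_sq_tailSolution_le (hl : 1 < l) (hq : 0 < q) (hlq : 1 < l * q)
    (hu : Summable fun k => q ^ k * u k ^ 2) (m : ℕ) :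
    (Summable fun j => u (m + j) / l ^ (j + 1)) ∧
      q ^ m * tailSolution l u m ^ 2 ≤
        q / (l * (l * q - 1)) * ∑' j, q ^ (m + j) * u (m + j) ^ 2 / l ^ j := by
  have hl₀ : 0 < l := by linarith
  have hr : (l * q)⁻¹ < 1 := inv_lt_one_of_one_lt₀ hlq
  have hgeom : Summable fun j : ℕ => (l * q)⁻¹ ^ j :=
    summable_geometric_of_lt_one (by positivity) hr
  have htail := summable_nat_add_div_pow (fun k => by positivity) hu hl.le m
  -- Cauchy–Schwarz against the geometric weights `(l q)⁻ʲ`.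
  have hratio : ∀ j, (u (m + j) / l ^ (j + 1)) ^ 2 / (l * q)⁻¹ ^ j =
      (q ^ (m + j) * u (m + j) ^ 2 / l ^ j) / (q ^ m * l ^ 2) := by
    intro j
    rw [div_pow, inv_pow, div_inv_eq_mul, mul_pow, pow_add, pow_succ]
    field_simp
    ring
  obtain ⟨hsum, hcs⟩ := summable_and_sq_tsum_le (f := fun j => u (m + j) / l ^ (j + 1))
    (fun j => by positivity) hgeom ((htail.div_const _).congr fun j => (hratio j).symm)
  refine ⟨hsum, ?_⟩
  rw [tailSolution, neg_sq]
  calc q ^ m * (∑' j, u (m + j) / l ^ (j + 1)) ^ 2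
      ≤ q ^ m * ((∑' j, (l * q)⁻¹ ^ j) * ∑' j, (u (m + j) / l ^ (j + 1)) ^ 2 / (l * q)⁻¹ ^ j) :=
        mul_le_mul_of_nonneg_left hcs (by positivity)
    _ = q / (l * (l * q - 1)) * ∑' j, q ^ (m + j) * u (m + j) ^ 2 / l ^ j := by
        rw [tsum_geometric_of_lt_one (by positivity) hr]
        simp only [hratio, tsum_div_const]
        have : l * q - 1 ≠ 0 := by linarith
        generalize ∑' j, q ^ (m + j) * u (m + j) ^ 2 / l ^ j = W
        field_simp

theorem summable_and_tsum_weighted_sq_tailSolution_le (hl : 1 < l) (hq : 0 < q)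
    (hlq : 1 < l * q) (hu : Summable fun k => q ^ k * u k ^ 2) :
    (Summable fun m => q ^ m * tailSolution l u m ^ 2) ∧
      ∑' m, q ^ m * tailSolution l u m ^ 2 ≤
        q / ((l * q - 1) * (l - 1)) * ∑' k, q ^ k * u k ^ 2 := by
  set V := ∑' k, q ^ k * u k ^ 2
  have hl₀ : 0 < l := by linarith
  have hgeom : Summable fun j : ℕ => l⁻¹ ^ j :=
    summable_geometric_of_lt_one (by positivity) (inv_lt_one_of_one_lt₀ hl)
  have hshift : ∀ n j, ∑ m ∈ range n, q ^ (m + j) * u (m + j) ^ 2 ≤ V := fun n j =>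
    ((summable_nat_add_iff j).2 hu).sum_le_tsum _ (fun _ _ => by positivity) |>.trans
      (tsum_comp_le_tsum_of_inj hu (fun _ => by positivity) (add_left_injective j))
  suffices h : ∀ n, ∑ m ∈ range n, q ^ m * tailSolution l u m ^ 2 ≤
      q / ((l * q - 1) * (l - 1)) * V from
    ⟨summable_of_sum_range_le (fun _ => by positivity) h,
      Real.tsum_le_of_sum_range_le (fun _ => by positivity) h⟩
  intro n
  have hpoint := fun m => (summable_and_weighted_sq_tailSolution_le hl hq hlq hu m).2
  calc ∑ m ∈ range n, q ^ m * tailSolution l u m ^ 2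
      ≤ ∑ m ∈ range n, q / (l * (l * q - 1)) * ∑' j, q ^ (m + j) * u (m + j) ^ 2 / l ^ j :=
        sum_le_sum fun m _ => hpoint m
    _ = q / (l * (l * q - 1)) * ∑' j, (∑ m ∈ range n, q ^ (m + j) * u (m + j) ^ 2) / l ^ j := by
        simp only [← mul_sum, sum_div]
        rw [Summable.tsum_finsetSum fun m _ =>
          summable_nat_add_div_pow (fun k => by positivity) hu hl.le m]
    _ ≤ q / (l * (l * q - 1)) * ∑' j, V * l⁻¹ ^ j := by
        have hle : ∀ j, (∑ m ∈ range n, q ^ (m + j) * u (m + j) ^ 2) / l ^ j ≤ V * l⁻¹ ^ j :=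
          fun j => by
            rw [inv_pow, ← div_eq_mul_inv]
            exact div_le_div_of_nonneg_right (hshift n j) (by positivity)
        have hC : 0 ≤ q / (l * (l * q - 1)) := div_nonneg hq.le (by nlinarith)
        refine mul_le_mul_of_nonneg_left (Summable.tsum_le_tsum hle ?_ (hgeom.mul_left V)) hC
        exact (hgeom.mul_left V).of_nonneg_of_le (fun j => by positivity) hle
    _ = q / ((l * q - 1) * (l - 1)) * V := by
        rw [tsum_mul_left, tsum_geometric_of_lt_one (by positivity) (inv_lt_one_of_one_lt₀ hl)]
        have : l * q - 1 ≠ 0 := by linarith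
        have : l - 1 ≠ 0 := by linarith
        field_simp

end

theorem summable_weighted_sq_three_term {q : ℝ} (hq : 1 ≤ q) {x : ℕ → ℝ}
    (hx : Summable fun m => q ^ m * x m ^ 2) (a b c : ℝ) :
    Summable fun m => q ^ m * (a * x (m + 2) + b * x (m + 1) + c * x m) ^ 2 := by
  have hx₁ := (summable_nat_add_iff 1).2 hx
  have hx₂ := (summable_nat_add_iff 2).2 hx
  refine Summable.of_nonneg_of_le (fun m => by positivity) (fun m => ?_)
    (((hx₂.mul_left (a ^ 2)).add (hx₁.mul_left (b ^ 2))).add (hx.mul_left (c ^ 2)) |>.mul_left 3)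
  have hpow : 0 ≤ q ^ m := by positivity
  calc q ^ m * (a * x (m + 2) + b * x (m + 1) + c * x m) ^ 2
      ≤ 3 * (a ^ 2 * (q ^ m * x (m + 2) ^ 2) + b ^ 2 * (q ^ m * x (m + 1) ^ 2) +
          c ^ 2 * (q ^ m * x m ^ 2)) := by
        nlinarith [mul_nonneg hpow (sq_nonneg (a * x (m + 2) - b * x (m + 1))),
          mul_nonneg hpow (sq_nonneg (b * x (m + 1) - c * x m)),
          mul_nonneg hpow (sq_nonneg (a * x (m + 2) - c * x m))]
    _ ≤ 3 * (a ^ 2 * (q ^ (m + 2) * x (m + 2) ^ 2) + b ^ 2 * (q ^ (m + 1) * x (m + 1) ^ 2) +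
          c ^ 2 * (q ^ m * x m ^ 2)) := by
        gcongr <;> omega

theorem exists_eq_pow_mul_add_of_summable {ζ : ℕ → ℝ}
    (h : Summable fun m => 3 ^ m * (3 * ζ (m + 2) - 16 * ζ (m + 1) + 5 * ζ m) ^ 2) :
    ∃ A : ℝ, ∃ ζ' : ℕ → ℝ, (∀ k, ζ k = 5 ^ k * A + ζ' k) ∧
      Summable (fun m => 3 ^ m * ζ' m ^ 2) ∧
      ∑' m, 3 ^ m * ζ' m ^ 2 ≤ 9 / 56 * (ζ 1 - 5 * ζ 0) ^ 2 +
        3 / 28 * ∑' m, 3 ^ m * (3 * ζ (m + 2) - 16 * ζ (m + 1) + 5 * ζ m) ^ 2 := by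
  set u : ℕ → ℝ := fun k => ζ (k + 1) - 5 * ζ k
  obtain ⟨hu, hU⟩ := summable_and_tsum_le_of_mul_succ_sub (q := 3) (u := u) (by norm_num)
    (fun m => by ring) h
  have hl : (1 : ℝ) < 5 := by norm_num
  have hq : (0 : ℝ) < 3 := by norm_num
  have hlq : (1 : ℝ) < 5 * 3 := by norm_num
  obtain ⟨hs, hS⟩ := summable_and_tsum_weighted_sq_tailSolution_le hl hq hlq hu
  have hrec := tailSolution_succ (by norm_num) fun m =>
    (summable_and_weighted_sq_tailSolution_le hl hq hlq hu m).1
  refine ⟨ζ 0 - tailSolution 5 u 0, tailSolution 5 u,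
    eq_pow_mul_add_of_succ_eq (fun k => by ring) hrec, hs, ?_⟩
  norm_num at hU hS ⊢
  linarith

theorem summable_of_eq_pow_mul_add {ζ ζ' : ℕ → ℝ} {A : ℝ} (hζ : ∀ k, ζ k = 5 ^ k * A + ζ' k)
    (hs : Summable fun m => 3 ^ m * ζ' m ^ 2) :
    Summable fun m => 3 ^ m * (3 * ζ (m + 2) - 16 * ζ (m + 1) + 5 * ζ m) ^ 2 :=
  (summable_weighted_sq_three_term (by norm_num) hs 3 (-16) 5).congr fun m => by
    rw [hζ, hζ, hζ]; ring

theorem summable_pow_succ_mul_iff {q : ℝ} (hq : q ≠ 0) {f : ℕ → ℝ} :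
    Summable (fun m => q ^ (m + 1) * f m) ↔ Summable fun m => q ^ m * f m := by
  simp_rw [pow_succ', mul_assoc]
  exact summable_mul_left_iff hq

theorem tsum_pow_succ_mul (q : ℝ) (f : ℕ → ℝ) :
    ∑' m, q ^ (m + 1) * f m = q * ∑' m, q ^ m * f m := by
  simp_rw [pow_succ', mul_assoc]
  exact tsum_mul_left

/-- Σ 3^m (3η_{m+2} - 16η_{m+1} + 5η_m)^2 < ∞ iff η_m = 5^m A + η'_m with
Σ 3^m (η'_m)^2 < ∞, with an explicit bound involving (η_2 - 5η_1)^2. -/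
theorem stmt6 :
    ∃ C₁ C₂ : ℝ, ∀ η : ℕ → ℝ,
      ((Summable (fun m : ℕ =>
          (3:ℝ)^(m+1) * (3 * η (m+3) - 16 * η (m+2) + 5 * η (m+1))^2) ↔
        ∃ (A : ℝ) (η' : ℕ → ℝ),
          (∀ m : ℕ, 1 ≤ m → η m = (5:ℝ)^m * A + η' m) ∧
          Summable (fun m : ℕ => (3:ℝ)^(m+1) * (η' (m+1))^2)) ∧
      (Summable (fun m : ℕ =>
          (3:ℝ)^(m+1) * (3 * η (m+3) - 16 * η (m+2) + 5 * η (m+1))^2) →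
        ∃ (A : ℝ) (η' : ℕ → ℝ),
          (∀ m : ℕ, 1 ≤ m → η m = (5:ℝ)^m * A + η' m) ∧
          Summable (fun m : ℕ => (3:ℝ)^(m+1) * (η' (m+1))^2) ∧
          (∑' m : ℕ, (3:ℝ)^(m+1) * (η' (m+1))^2) ≤
            C₁ * (η 2 - 5 * η 1)^2 +
            C₂ * ∑' m : ℕ,
              (3:ℝ)^(m+1) * (3 * η (m+3) - 16 * η (m+2) + 5 * η (m+1))^2)) := by
  refine ⟨27 / 56, 3 / 28, fun η => ?_⟩
  have h3 : (3 : ℝ) ≠ 0 := by norm_num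
  set E : ℕ → ℝ := fun m => 3 ^ (m + 1) * (3 * η (m + 3) - 16 * η (m + 2) + 5 * η (m + 1)) ^ 2
  have decompose : Summable E → ∃ (A : ℝ) (η' : ℕ → ℝ), (∀ m, 1 ≤ m → η m = 5 ^ m * A + η' m) ∧
      Summable (fun m => (3 : ℝ) ^ (m + 1) * η' (m + 1) ^ 2) ∧
      ∑' m, (3 : ℝ) ^ (m + 1) * η' (m + 1) ^ 2 ≤
        27 / 56 * (η 2 - 5 * η 1) ^ 2 + 3 / 28 * ∑' m, E m := by
    intro h
    obtain ⟨A, ζ', hζ, hs, hle⟩ := exists_eq_pow_mul_add_of_summable (ζ := fun k => η (k + 1))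
      ((summable_pow_succ_mul_iff h3).1 h)
    refine ⟨A / 5, fun m => ζ' (m - 1), fun m hm => ?_, (summable_pow_succ_mul_iff h3).2 hs, ?_⟩
    · obtain ⟨k, rfl⟩ := Nat.exists_eq_add_of_le' hm
      dsimp only
      rw [hζ k, Nat.add_sub_cancel, pow_succ]
      ring
    · simp only [E, Nat.add_sub_cancel, tsum_pow_succ_mul]
      linarith
  refine ⟨⟨fun h => ?_, fun ⟨A, η', hη, hs⟩ => ?_⟩, decompose⟩
  · obtain ⟨A, η', hη, hs, -⟩ := decompose h
    exact ⟨A, η', hη, hs⟩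
  · refine (summable_pow_succ_mul_iff h3).2 (summable_of_eq_pow_mul_add (ζ := fun k => η (k + 1))
      (A := 5 * A) (ζ' := fun k => η' (k + 1)) (fun k => ?_) ((summable_pow_succ_mul_iff h3).1 hs))
    rw [hη (k + 1) (by omega), pow_succ]
    ring
end

section
/- Suppose a real sequence (a_m)_{m≥1} satisfies: the limit L = lim_{m→∞} b_m exists, where b_m = 5^m (30/7) Σ_{k=m+1}^∞ 3^{-k} a_k - 3^{-m} (12/7) Σ_{k=1}^m 5^k a_k (assume (a_m) is bounded so the series converge). Then there exist constants A_1, A_2 such that a_m = A_1 + A_2 (3/5)^m + o((3/5)^m) as m → ∞. Conversely, if a_m = A_1 + A_2 (3/5)^m + o((3/5)^m), then the limit of b_m exists. -/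
/-!
Split `b_m = X_m - Y_m` into the weighted tail `X_m = (30/7) 5^m Σ_{k>m} 3^{-k} a_k` and the
weighted head `Y_m = (12/7) 3^{-m} Σ_{k≤m} 5^k a_k`. Since `X_{m+1} - 5 X_m` and
`Y_{m+1} - Y_m / 3` are multiples of `(5/3)^m a_{m+1}`, the operator `(E - 5)(E - 1/3)` maps `b` to
`10 (5/3)^{m+1} (a_{m+1} - a_{m+2})`. So if `b_m → L`, then `(5/3)^n (a_n - a_{n+1}) → -4L/15`, and
summing the telescoping tail `a_n - A₁ = Σ_{j≥n} (a_j - a_{j+1})` with geometric weights gives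
`(5/3)^n (a_n - A₁) → -2L/3`.

Conversely `b` is linear in `a`: it sends `1` to `(15/7) 3^{-m}`, `(3/5)^n` to
`-3/2 + (18/7) 3^{-m}`, and an error `(3/5)^n δ_n` with `δ_n → 0` to a combination of two
geometrically weighted averages of `δ`, which tend to `0`.
-/

open Filter Finset Topology

section Toeplitz

variable {w δ : ℕ → ℝ} {c : ℝ}

lemma exists_abs_le_of_tendsto (hδ : Tendsto δ atTop (𝓝 c)) : ∃ D, ∀ n, |δ n| ≤ D := by
  obtain ⟨D, hD⟩ := isBounded_iff_forall_norm_le.mp (Metric.isBounded_range_of_tendsto δ hδ)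
  exact ⟨D, fun n => hD _ (Set.mem_range_self n)⟩

lemma abs_mul_le_abs_mul_of_abs_le {x y D : ℝ} (h : |y| ≤ D) : |x * y| ≤ |x| * D := by
  rw [abs_mul]
  exact mul_le_mul_of_nonneg_left h (abs_nonneg x)

lemma summable_mul_of_abs_le (hw : Summable w) {D : ℝ} (hD : ∀ n, |δ n| ≤ D) :
    Summable fun n => w n * δ n :=
  .of_norm_bounded (hw.abs.mul_right D) fun n => abs_mul_le_abs_mul_of_abs_le (hD n)

theorem tendsto_tsum_mul_add (hw : Summable w) (hδ : Tendsto δ atTop (𝓝 c)) :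
    Tendsto (fun m => ∑' j, w j * δ (m + j)) atTop (𝓝 ((∑' j, w j) * c)) := by
  obtain ⟨D, hD⟩ := exists_abs_le_of_tendsto hδ
  rw [← tsum_mul_right]
  exact tendsto_tsum_of_dominated_convergence (hw.abs.mul_right D)
    (fun j => ((hδ.comp (tendsto_add_atTop_nat j)).const_mul (w j)))
    (.of_forall fun m j => abs_mul_le_abs_mul_of_abs_le (hD _))

theorem tendsto_sum_range_mul_sub (hw : Summable w) (hδ : Tendsto δ atTop (𝓝 c)) :
    Tendsto (fun m => ∑ j ∈ range m, w j * δ (m - j)) atTop (𝓝 ((∑' j, w j) * c)) := by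
  obtain ⟨D, hD⟩ := exists_abs_le_of_tendsto hδ
  have hsum : ∀ m, ∑ j ∈ range m, w j * δ (m - j) =
      ∑' j, if j < m then w j * δ (m - j) else 0 := fun m => by
    rw [tsum_eq_sum (s := range m) fun j hj => if_neg (by simpa using hj)]
    exact sum_congr rfl fun j hj => (if_pos (mem_range.mp hj)).symm
  simp only [hsum, ← tsum_mul_right]
  refine tendsto_tsum_of_dominated_convergence (hw.abs.mul_right D) (fun j => ?_)
    (.of_forall fun m j => ?_)
  · refine Tendsto.congr' ?_ ((hδ.comp (tendsto_sub_atTop_nat j)).const_mul (w j))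
    filter_upwards [eventually_gt_atTop j] with m hm
    simp [hm]
  · split_ifs
    · exact abs_mul_le_abs_mul_of_abs_le (hD _)
    · simpa using mul_nonneg (abs_nonneg (w j)) ((abs_nonneg _).trans (hD 0))

end Toeplitz

lemma sum_Icc_one_eq_sum_range_sub {M : Type*} [AddCommMonoid M] (f : ℕ → M) (m : ℕ) :
    ∑ k ∈ Icc 1 m, f k = ∑ j ∈ range m, f (m - j) := by
  refine (sum_nbij' (fun j => m - j) (fun k => m - k) ?_ ?_ ?_ ?_ fun _ _ => rfl).symm <;>
    intro j hj <;> simp only [mem_range, mem_Icc] at hj ⊢ <;> omega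

theorem exists_tendsto_pow_mul_sub_of_tendsto {ρ ℓ : ℝ} {a : ℕ → ℝ} (hρ : 1 < ρ)
    (h : Tendsto (fun n => ρ ^ n * (a n - a (n + 1))) atTop (𝓝 ℓ)) :
    ∃ A, Tendsto (fun n => ρ ^ n * (a n - A)) atTop (𝓝 ((1 - ρ⁻¹)⁻¹ * ℓ)) := by
  obtain ⟨D, hD⟩ := exists_abs_le_of_tendsto h
  have hρ0 : ρ ≠ 0 := by positivity
  have hgeom : Summable fun j => ρ⁻¹ ^ j :=
    summable_geometric_of_lt_one (by positivity) (inv_lt_one_of_one_lt₀ hρ)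
  have hdiff : ∀ n, a n - a (n + 1) = ρ⁻¹ ^ n * (ρ ^ n * (a n - a (n + 1))) := fun n => by
    rw [← mul_assoc, ← mul_pow, inv_mul_cancel₀ hρ0, one_pow, one_mul]
  have hsum : Summable fun n => a n - a (n + 1) :=
    (summable_mul_of_abs_le hgeom hD).congr fun n => (hdiff n).symm
  refine ⟨a 0 - ∑' n, (a n - a (n + 1)), ?_⟩
  have htail : ∀ n, ρ ^ n * (a n - (a 0 - ∑' k, (a k - a (k + 1)))) =
      ∑' j, ρ⁻¹ ^ j * (ρ ^ (n + j) * (a (n + j) - a (n + j + 1))) := fun n => by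
    rw [← hsum.sum_add_tsum_nat_add n, sum_range_sub',
      show ∀ T, a n - (a 0 - (a 0 - a n + T)) = T from fun T => by ring, ← tsum_mul_left]
    refine tsum_congr fun j => ?_
    rw [add_comm j n, pow_add, inv_pow]
    field_simp
  rw [← tsum_geometric_of_lt_one (by positivity) (inv_lt_one_of_one_lt₀ hρ)]
  exact (tendsto_tsum_mul_add hgeom h).congr fun n => (htail n).symm

noncomputable section

def tailSum (a : ℕ → ℝ) (m : ℕ) : ℝ := ∑' k : ℕ, ((1:ℝ)/3)^(m+k+1) * a (m+k+1)

def headSum (a : ℕ → ℝ) (m : ℕ) : ℝ := ∑ k ∈ Icc 1 m, (5:ℝ)^k * a k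

def bSeq (a : ℕ → ℝ) (m : ℕ) : ℝ :=
  (5:ℝ)^m * (30/7) * tailSum a m - ((1:ℝ)/3)^m * (12/7) * headSum a m

end

section bSeq

variable {a f g δ : ℕ → ℝ}

lemma summable_third_pow_mul_of_abs_le {D : ℝ} (hf : ∀ n, |f n| ≤ D) :
    Summable fun k => ((1:ℝ)/3)^k * f k :=
  summable_mul_of_abs_le (summable_geometric_of_lt_one (by norm_num) (by norm_num)) hf

lemma summable_tailSum (ha : Summable fun k => ((1:ℝ)/3)^k * a k) (m : ℕ) :
    Summable fun k => ((1:ℝ)/3)^(m+k+1) * a (m+k+1) :=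
  ((summable_nat_add_iff (m + 1)).mpr ha).congr fun k => by rw [add_right_comm, add_comm k]

lemma tailSum_eq_add_tailSum_succ (ha : Summable fun k => ((1:ℝ)/3)^k * a k) (m : ℕ) :
    tailSum a m = ((1:ℝ)/3)^(m+1) * a (m+1) + tailSum a (m+1) := by
  unfold tailSum
  rw [(summable_tailSum ha m).tsum_eq_zero_add, add_zero]
  exact congrArg _ (tsum_congr fun k => by rw [show m + (k + 1) + 1 = m + 1 + k + 1 by omega])

lemma headSum_succ (m : ℕ) : headSum a (m+1) = headSum a m + (5:ℝ)^(m+1) * a (m+1) :=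
  sum_Icc_succ_top (by omega) _

/-- `(x - 5)(x - 1/3) = x² - 16/3 x + 5/3` annihilates both weights, so only differences of `a`
survive. -/
lemma bSeq_recurrence (ha : Summable fun k => ((1:ℝ)/3)^k * a k) (m : ℕ) :
    bSeq a (m+2) - 16/3 * bSeq a (m+1) + 5/3 * bSeq a m =
      10 * ((5:ℝ)/3)^(m+1) * (a (m+1) - a (m+2)) := by
  unfold bSeq
  rw [tailSum_eq_add_tailSum_succ ha m, tailSum_eq_add_tailSum_succ ha (m+1), headSum_succ (m+1),
    headSum_succ m, div_eq_mul_one_div (5:ℝ) 3, mul_pow]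
  ring

lemma tendsto_pow_mul_sub_succ_of_tendsto_bSeq (ha : Summable fun k => ((1:ℝ)/3)^k * a k)
    {L : ℝ} (hL : Tendsto (bSeq a) atTop (𝓝 L)) :
    Tendsto (fun n => ((5:ℝ)/3)^n * (a n - a (n+1))) atTop (𝓝 (-(4/15) * L)) := by
  rw [← tendsto_add_atTop_iff_nat 1]
  have := (((hL.comp (tendsto_add_atTop_nat 2)).sub
    ((hL.comp (tendsto_add_atTop_nat 1)).const_mul (16/3))).add (hL.const_mul (5/3))).div_const 10
  convert this using 2 with m
  · simp only [Function.comp_apply, bSeq_recurrence ha]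
    ring
  · ring

lemma bSeq_add (hf : Summable fun k => ((1:ℝ)/3)^k * f k)
    (hg : Summable fun k => ((1:ℝ)/3)^k * g k) : bSeq (f + g) = bSeq f + bSeq g := by
  funext m
  have htail : tailSum (f + g) m = tailSum f m + tailSum g m := by
    unfold tailSum
    rw [← (summable_tailSum hf m).tsum_add (summable_tailSum hg m)]
    simp only [Pi.add_apply, mul_add]
  have hhead : headSum (f + g) m = headSum f m + headSum g m := by
    simp only [headSum, Pi.add_apply, mul_add, sum_add_distrib]
  simp only [bSeq, Pi.add_apply, htail, hhead]
  ring

lemma bSeq_smul (c : ℝ) : bSeq (c • f) = c • bSeq f := by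
  funext m
  simp only [bSeq, tailSum, headSum, Pi.smul_apply, smul_eq_mul, mul_left_comm _ c,
    tsum_mul_left, ← mul_sum]
  ring

lemma bSeq_pow {x : ℝ} (hx : |x| < 3) (hx5 : 5 * x ≠ 1) (m : ℕ) :
    bSeq (x ^ ·) m = 30/7 * 5^m * (x/3)^(m+1) / (1 - x/3)
      - 12/7 * ((1:ℝ)/3)^m * ((5*x)^(m+1) - 5*x) / (5*x - 1) := by
  have htail : tailSum (x ^ ·) m = (x/3)^(m+1) / (1 - x/3) := by
    have hx3 : |x/3| < 1 := by rw [abs_lt] at hx ⊢; constructor <;> linarith [hx.1, hx.2]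
    have hterm : ∀ k, ((1:ℝ)/3)^(m+k+1) * x^(m+k+1) = (x/3)^(m+1) * (x/3)^k := fun k => by
      rw [← mul_pow, one_div_mul_eq_div, ← pow_add, add_right_comm]
    rw [tailSum, tsum_congr hterm, tsum_mul_left, tsum_geometric_of_abs_lt_one hx3,
      div_eq_mul_inv _ (1 - x/3)]
  have hhead : headSum (x ^ ·) m = ((5*x)^(m+1) - 5*x) / (5*x - 1) := by
    rw [headSum, ← Ico_add_one_right_eq_Icc]
    simp only [← mul_pow]
    rw [geom_sum_Ico hx5 (by omega), pow_one]
  rw [bSeq, htail, hhead]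
  ring

lemma bSeq_pow_mul_eq (m : ℕ) : bSeq (fun n => ((3:ℝ)/5)^n * δ n) m =
    6/7 * ∑' j, ((1:ℝ)/5)^j * δ (m + j + 1) - 12/7 * ∑ j ∈ range m, ((1:ℝ)/3)^j * δ (m - j) := by
  have htail : (5:ℝ)^m * tailSum (fun n => ((3:ℝ)/5)^n * δ n) m =
      1/5 * ∑' j, ((1:ℝ)/5)^j * δ (m + j + 1) := by
    rw [tailSum, ← tsum_mul_left, ← tsum_mul_left]
    refine tsum_congr fun j => ?_
    simp only [div_pow, one_pow, pow_succ, pow_add]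
    field_simp
  have hhead : ((1:ℝ)/3)^m * headSum (fun n => ((3:ℝ)/5)^n * δ n) m =
      ∑ j ∈ range m, ((1:ℝ)/3)^j * δ (m - j) := by
    rw [headSum, sum_Icc_one_eq_sum_range_sub, mul_sum]
    refine sum_congr rfl fun j hj => ?_
    obtain ⟨i, rfl⟩ := Nat.exists_eq_add_of_le (mem_range.mp hj).le
    simp only [Nat.add_sub_cancel_left, div_pow, one_pow, pow_add]
    field_simp
  rw [bSeq]
  linear_combination 30/7 * htail - 12/7 * hhead

lemma tendsto_bSeq_pow_mul (hδ : Tendsto δ atTop (𝓝 0)) :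
    Tendsto (bSeq fun n => ((3:ℝ)/5)^n * δ n) atTop (𝓝 0) := by
  have htail := tendsto_tsum_mul_add (w := fun j => ((1:ℝ)/5)^j)
    (summable_geometric_of_lt_one (by norm_num) (by norm_num))
    ((tendsto_add_atTop_iff_nat 1).mpr hδ)
  have hhead := tendsto_sum_range_mul_sub (w := fun j => ((1:ℝ)/3)^j)
    (summable_geometric_of_lt_one (by norm_num) (by norm_num)) hδ
  have := (htail.const_mul (6/7)).sub (hhead.const_mul (12/7))
  simp only [mul_zero, sub_zero] at this
  exact this.congr fun m => (bSeq_pow_mul_eq m).symm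

lemma tendsto_bSeq_const_add_geometric (A₁ A₂ : ℝ) (hδ : Tendsto δ atTop (𝓝 0)) :
    Tendsto (bSeq fun n => A₁ + A₂ * ((3:ℝ)/5)^n + ((3:ℝ)/5)^n * δ n) atTop
      (𝓝 (-(3/2) * A₂)) := by
  obtain ⟨D, hD⟩ := exists_abs_le_of_tendsto hδ
  have hone : bSeq (fun n => (1:ℝ)^n) = fun m => 15/7 * ((1:ℝ)/3)^m := funext fun m => by
    rw [bSeq_pow (by norm_num) (by norm_num)]
    ring
  have hgeom : bSeq (fun n => ((3:ℝ)/5)^n) = fun m => -3/2 + 18/7 * ((1:ℝ)/3)^m :=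
    funext fun m => by
      rw [bSeq_pow (by norm_num) (by norm_num)]
      simp only [div_pow, one_pow, pow_succ]
      field_simp
      ring
  have hsum_one : Summable fun k => ((1:ℝ)/3)^k * (A₁ • fun n => (1:ℝ)^n) k :=
    summable_third_pow_mul_of_abs_le (D := |A₁|) fun n => by simp
  have hsum_geom : Summable fun k => ((1:ℝ)/3)^k * (A₂ • fun n => ((3:ℝ)/5)^n) k :=
    summable_third_pow_mul_of_abs_le (D := |A₂|) fun n => by
      rw [Pi.smul_apply, smul_eq_mul, abs_mul, abs_of_nonneg (by positivity : (0:ℝ) ≤ (3/5)^n)]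
      exact mul_le_of_le_one_right (abs_nonneg A₂) (pow_le_one₀ (by norm_num) (by norm_num))
  have hsum_err : Summable fun k => ((1:ℝ)/3)^k * (((3:ℝ)/5)^k * δ k) :=
    summable_third_pow_mul_of_abs_le (D := D) fun n => by
      rw [abs_mul, abs_of_nonneg (by positivity)]
      exact mul_le_of_le_one_left (abs_nonneg _) (pow_le_one₀ (by norm_num) (by norm_num)) |>.trans
        (hD n)
  have hdecomp : (fun n => A₁ + A₂ * ((3:ℝ)/5)^n + ((3:ℝ)/5)^n * δ n) =
      (A₁ • fun n => (1:ℝ)^n) + (A₂ • fun n => ((3:ℝ)/5)^n) + fun n => ((3:ℝ)/5)^n * δ n := by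
    funext n
    simp
  have hsum_main : Summable fun k => ((1:ℝ)/3)^k *
      (((A₁ • fun n => (1:ℝ)^n) + (A₂ • fun n => ((3:ℝ)/5)^n) : ℕ → ℝ) k) :=
    (hsum_one.add hsum_geom).congr fun k => (mul_add _ _ _).symm
  rw [hdecomp, bSeq_add hsum_main hsum_err,
    bSeq_add hsum_one hsum_geom, bSeq_smul, bSeq_smul, hone, hgeom]
  have hthird := tendsto_pow_atTop_nhds_zero_of_lt_one (r := (1:ℝ)/3) (by norm_num) (by norm_num)
  have := ((hthird.const_mul (A₁ * (15/7) + A₂ * (18/7))).const_add (-(3/2) * A₂)).add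
    (tendsto_bSeq_pow_mul hδ)
  simp only [mul_zero, add_zero] at this
  refine this.congr fun m => ?_
  simp only [Pi.add_apply, Pi.smul_apply, smul_eq_mul]
  ring

end bSeq

/-- for bounded (a_m), the limit of
b_m = 5^m (30/7) Σ_{k>m} 3^{-k} a_k - 3^{-m} (12/7) Σ_{k=1}^m 5^k a_k exists iff
a_m = A₁ + A₂ (3/5)^m + o((3/5)^m). -/
theorem stmt11 (a : ℕ → ℝ) (hb : ∃ C : ℝ, ∀ m : ℕ, |a m| ≤ C) :
    (∃ L : ℝ, Filter.Tendsto (fun m : ℕ =>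
        (5:ℝ)^m * (30/7) * (∑' k : ℕ, ((1:ℝ)/3)^(m+k+1) * a (m+k+1))
        - ((1:ℝ)/3)^m * (12/7) * ∑ k ∈ Finset.Icc 1 m, (5:ℝ)^k * a k)
        Filter.atTop (nhds L)) ↔
    (∃ A₁ A₂ : ℝ, Filter.Tendsto (fun m : ℕ =>
        ((5:ℝ)/3)^m * (a m - A₁ - A₂ * ((3:ℝ)/5)^m)) Filter.atTop (nhds 0)) := by
  change (∃ L, Tendsto (bSeq a) atTop (𝓝 L)) ↔ _
  have hpow : ∀ m : ℕ, ((5:ℝ)/3)^m * ((3:ℝ)/5)^m = 1 := fun m => by rw [← mul_pow]; norm_num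
  constructor
  · rintro ⟨L, hL⟩
    obtain ⟨C, hC⟩ := hb
    obtain ⟨A, hA⟩ := exists_tendsto_pow_mul_sub_of_tendsto (by norm_num : (1:ℝ) < 5/3)
      (tendsto_pow_mul_sub_succ_of_tendsto_bSeq (summable_third_pow_mul_of_abs_le hC) hL)
    refine ⟨A, -(2/3) * L, ?_⟩
    convert hA.sub_const (-(2/3) * L) using 2 with m
    · linear_combination (2/3 * L) * hpow m
    · norm_num
      ring
  · rintro ⟨A₁, A₂, h⟩
    refine ⟨-(3/2) * A₂, ?_⟩
    convert tendsto_bSeq_const_add_geometric A₁ A₂ h using 3 with n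
    linear_combination (A₁ + A₂ * ((3:ℝ)/5)^n - a n) * hpow n
end
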